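/- Let K ≥ 1, n_t ≥ 1, n_r ≥ 1 be integers and let r be a real number with min(n_t, n_r/(K+1)) ≤ r ≤ min(n_t, n_r/K). Then min over k ∈ {1, …, K} of d*_{k·n_t, n_r}(k·r) equals d*_{K·n_t, n_r}(K·r); i.e., in the heavily loaded regime the symmetric diversity-multiplexing tradeoff of the K-user MIMO multiple access channel coincides with that of a (K·n_t) × n_r antenna-pooled MIMO channel at multiplexing gain K·r. -/

import Mathlib

/-!
Writing `d*_{m,n}(x) = (m - x)(n - x) + φ(x)` with `φ(x) = {x}(1 - {x})`, the gap between the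
`k`-user and the `K`-user terms at gains `k r` and `K r` is `w d + φ(k r) - φ(K r)` with
`w = (K - k)(n_t - r)` and `d = (K + k) r - n_r`, both nonnegative in the heavily loaded regime.
For `A = {k r}`, `B = {K r}` one has `φ(K r) - φ(k r) = (A - B)(A + B - 1)`, where `A - B ≡ w` and
`A + B - 1 ≡ d` modulo `1` with both factors in `[-1, 1)`; comparing them with the fractional parts
of `w` and `d` gives `(A - B)(A + B - 1) ≤ w d`. When `n_t ≤ n_r / (K + 1)` one has `r = n_t`
instead and every term vanishes.
-/

/-- The Zheng–Tse diversity-multiplexing tradeoff curve `d*_{m,n}` of an `m × n` MIMO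
Rayleigh point-to-point channel: the continuous piecewise-linear function with
`d*(k) = (m−k)(n−k)` at integers `k` and affine on each interval `[k, k+1]`; explicitly,
for `k = ⌊r⌋`, `d*(r) = (m−k)(n−k) − (r−k)(m+n−2k−1)`. -/
noncomputable def dstar (m n : ℕ) (r : ℝ) : ℝ :=
  ((m : ℝ) - (⌊r⌋ : ℝ)) * ((n : ℝ) - (⌊r⌋ : ℝ)) -
    (r - (⌊r⌋ : ℝ)) * ((m : ℝ) + (n : ℝ) - 2 * (⌊r⌋ : ℝ) - 1)

open Int

lemma fract_le_self_of_nonneg {x : ℝ} (hx : 0 ≤ x) : fract x ≤ x := by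
  have : (0 : ℝ) ≤ ⌊x⌋ := by exact_mod_cast Int.floor_nonneg.mpr hx
  linarith [self_sub_fract x]

lemma eq_fract_or_eq_fract_sub_one {u : ℝ} (h0 : -1 ≤ u) (h1 : u < 1) :
    u = fract u ∨ u = fract u - 1 := by
  rcases le_or_gt 0 u with hu | hu
  · exact Or.inl (fract_eq_self.mpr ⟨hu, h1⟩).symm
  · refine Or.inr ?_
    rw [← fract_add_intCast u 1, fract_eq_self.mpr ⟨by push_cast; linarith, by push_cast; linarith⟩]
    push_cast
    ring

lemma mul_le_mul_of_fract_eq {u v w d : ℝ} (hu0 : -1 ≤ u) (hu1 : u < 1) (hv0 : -1 ≤ v)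
    (hv1 : v < 1) (huv : -1 ≤ u + v) (hw : 0 ≤ w) (hd : 0 ≤ d) (hfu : fract u = fract w)
    (hfv : fract v = fract d) : u * v ≤ w * d := by
  have hαβ : fract w * fract d ≤ w * d :=
    mul_le_mul (fract_le_self_of_nonneg hw) (fract_le_self_of_nonneg hd) (fract_nonneg d) hw
  have hα0 := fract_nonneg w
  have hβ0 := fract_nonneg d
  have hα1 := fract_lt_one w
  have hβ1 := fract_lt_one d
  rcases eq_fract_or_eq_fract_sub_one hu0 hu1 with hu | hu <;>
  rcases eq_fract_or_eq_fract_sub_one hv0 hv1 with hv | hv <;>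
  rw [hfu] at hu <;> rw [hfv] at hv <;> subst hu hv
  · exact hαβ
  · nlinarith
  · nlinarith
  · -- `u + v ≥ -1` says `{w} + {d} ≥ 1`, i.e. `(1 - {w})(1 - {d}) ≤ {w}{d}`
    nlinarith

lemma dstar_eq (m n : ℕ) (x : ℝ) :
    dstar m n x = ((m : ℝ) - x) * ((n : ℝ) - x) + fract x * (1 - fract x) := by
  unfold dstar fract
  ring

lemma dstar_natCast_self (m n : ℕ) : dstar m n m = 0 := by
  simp [dstar_eq]

lemma dstar_mul_le_dstar_mul {k K nt nr : ℕ} {r : ℝ} (hkK : k ≤ K) (hrnt : r ≤ nt)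
    (hnr : (nr : ℝ) ≤ ((K : ℝ) + k) * r) :
    dstar (K * nt) nr ((K : ℝ) * r) ≤ dstar (k * nt) nr ((k : ℝ) * r) := by
  set A := fract ((k : ℝ) * r)
  set B := fract ((K : ℝ) * r)
  have hkK' : (k : ℝ) ≤ K := by exact_mod_cast hkK
  have hA : fract (A - B) = fract (((K : ℝ) - k) * (nt - r)) := by
    rw [fract_eq_fract]
    refine ⟨⌊(K : ℝ) * r⌋ - ⌊(k : ℝ) * r⌋ - (K - k) * nt, ?_⟩
    simp only [A, B, fract]
    push_cast
    ring
  have hB : fract (A + B - 1) = fract (((K : ℝ) + k) * r - nr) := by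
    rw [fract_eq_fract]
    refine ⟨nr - ⌊(k : ℝ) * r⌋ - ⌊(K : ℝ) * r⌋ - 1, ?_⟩
    simp only [A, B, fract]
    push_cast
    ring
  have hA0 := fract_nonneg ((k : ℝ) * r)
  have hA1 := fract_lt_one ((k : ℝ) * r)
  have hB0 := fract_nonneg ((K : ℝ) * r)
  have hB1 := fract_lt_one ((K : ℝ) * r)
  have hfrac := mul_le_mul_of_fract_eq (by linarith) (by linarith) (by linarith) (by linarith)
    (by linarith) (mul_nonneg (sub_nonneg.mpr hkK') (sub_nonneg.mpr hrnt)) (sub_nonneg.mpr hnr)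
    hA hB
  rw [dstar_eq, dstar_eq]
  push_cast
  linear_combination hfrac

theorem mac_dmt_heavily_loaded_general (K nt nr : ℕ) (hK : 1 ≤ K)
    (r : ℝ) (hr0 : min (nt : ℝ) ((nr : ℝ) / ((K : ℝ) + 1)) ≤ r)
    (hr1 : r ≤ min (nt : ℝ) ((nr : ℝ) / (K : ℝ))) :
    (Finset.Icc 1 K).inf' (Finset.nonempty_Icc.mpr hK)
      (fun k => dstar (k * nt) nr ((k : ℝ) * r)) = dstar (K * nt) nr ((K : ℝ) * r) := by
  have hrnt : r ≤ nt := hr1.trans (min_le_left _ _)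
  refine le_antisymm (Finset.inf'_le _ (Finset.mem_Icc.mpr ⟨hK, le_rfl⟩)) ?_
  refine Finset.le_inf' _ _ fun k hk => ?_
  obtain ⟨hk1, hkK⟩ := Finset.mem_Icc.mp hk
  rcases le_or_gt (nt : ℝ) (nr / (K + 1)) with hnt | hnt
  · have hr : r = nt := le_antisymm hrnt ((le_min le_rfl hnt).trans hr0)
    have hpool (j : ℕ) : dstar (j * nt) nr ((j : ℝ) * r) = 0 := by
      rw [hr, ← Nat.cast_mul, dstar_natCast_self]
    rw [hpool, hpool]
  · have hr : nr / (K + 1) ≤ r := by rwa [min_eq_right hnt.le] at hr0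
    have hr_nonneg : 0 ≤ r := (by positivity : (0 : ℝ) ≤ nr / (K + 1)).trans hr
    have hk1' : (1 : ℝ) ≤ k := by exact_mod_cast hk1
    refine dstar_mul_le_dstar_mul hkK hrnt ?_
    rw [div_le_iff₀ (by positivity)] at hr
    nlinarith

/-- Heavily loaded regime: for `min(n_t, n_r/(K+1)) ≤ r ≤ min(n_t, n_r/K)`, the symmetric DMT
`min_{k=1,…,K} d*_{k·n_t, n_r}(k·r)` of the `K`-user MIMO multiple access channel coincides
with that of a `(K·n_t) × n_r` antenna-pooled MIMO channel at multiplexing gain `K·r`. -/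
theorem mac_dmt_heavily_loaded (K nt nr : ℕ) (hK : 1 ≤ K) (hnt : 1 ≤ nt) (hnr : 1 ≤ nr)
    (r : ℝ) (hr0 : min (nt : ℝ) ((nr : ℝ) / ((K : ℝ) + 1)) ≤ r)
    (hr1 : r ≤ min (nt : ℝ) ((nr : ℝ) / (K : ℝ))) :
    (Finset.Icc 1 K).inf' (Finset.nonempty_Icc.mpr hK)
      (fun k => dstar (k * nt) nr ((k : ℝ) * r)) = dstar (K * nt) nr ((K : ℝ) * r) :=
  mac_dmt_heavily_loaded_general K nt nr hK r hr0 hr1
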